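/- Let s ≥ 1 and c = (c_0, c_1, …, c_s) ∈ ℤ^{s+1} with c_0 ≠ 0, c_s ≠ 0 and gcd(c_0,…,c_s) = 1, and let m ≥ 1. Then the m × m minors of the matrix M(c,m) are relatively prime, i.e., the gcd of all determinants of m × m submatrices of M(c,m) equals 1. -/

import Mathlib

/-!
If a prime `p` divided every maximal minor of `M(c,m)`, let `t` be the first index with
`p ∤ c t` (it exists since the `c k` are coprime). Modulo `p` the `m` consecutive columns
`t, …, t + m - 1` form an upper triangular matrix with diagonal `c t`, so that minor is
congruent to `c t ^ m`, which `p` does not divide.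
-/

open Matrix

section BandMatrix

variable {R : Type*} {s : ℕ}

def bandMatrix [Zero R] (c : Fin (s + 1) → R) (m : ℕ) : Matrix (Fin m) (Fin (m + s)) R :=
  Matrix.of fun i j =>
    if h : (i : ℕ) ≤ j ∧ (j : ℕ) ≤ i + s then c ⟨j - i, by omega⟩ else 0

lemma bandMatrix_map [Zero R] {S : Type*} [Zero S] (c : Fin (s + 1) → R) (m : ℕ) (f : R → S)
    (hf : f 0 = 0) : (bandMatrix c m).map f = bandMatrix (f ∘ c) m := by
  ext i j
  simp only [bandMatrix, map_apply, of_apply, Function.comp_apply]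
  split_ifs <;> simp [hf]

def shiftEmb (m : ℕ) (t : Fin (s + 1)) : Fin m ↪ Fin (m + s) :=
  ⟨fun i => ⟨i + t, by omega⟩, fun i j h => Fin.ext (by simpa using h)⟩

@[simp]
lemma coe_shiftEmb_apply (m : ℕ) (t : Fin (s + 1)) (i : Fin m) :
    (shiftEmb m t i : ℕ) = i + t :=
  rfl

lemma det_bandMatrix_submatrix_shiftEmb [CommRing R] (c : Fin (s + 1) → R) (m : ℕ)
    (t : Fin (s + 1)) (hc : ∀ k < t, c k = 0) :
    ((bandMatrix c m).submatrix id (shiftEmb m t)).det = c t ^ m := by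
  rw [det_of_isUpperTriangular]
  · rw [← Fin.prod_const]
    refine Finset.prod_congr rfl fun i _ => ?_
    simp [bandMatrix, Fin.is_le t]
  · intro i j hji
    simp only [bandMatrix, submatrix_apply, id, of_apply]
    rw [dite_eq_right_iff]
    intro h
    exact hc _ (by simp only [Fin.lt_def, id, coe_shiftEmb_apply] at hji h ⊢; omega)

lemma dvd_det_bandMatrix_submatrix_shiftEmb_sub [CommRing R] (x : R) (c : Fin (s + 1) → R)
    (m : ℕ) (t : Fin (s + 1)) (hc : ∀ k < t, x ∣ c k) :
    x ∣ ((bandMatrix c m).submatrix id (shiftEmb m t)).det - c t ^ m := by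
  set f := Ideal.Quotient.mk (Ideal.span {x})
  rw [← Ideal.mem_span_singleton, ← Ideal.Quotient.eq, map_pow, RingHom.map_det,
    RingHom.mapMatrix_apply, ← submatrix_map, bandMatrix_map _ _ _ (map_zero f)]
  exact det_bandMatrix_submatrix_shiftEmb _ _ _
    fun k hk => (Ideal.Quotient.eq_zero_iff_dvd x _).mpr (hc k hk)

lemma exists_not_dvd_det_bandMatrix_submatrix [CommRing R] {p : R} (hp : Prime p)
    (c : Fin (s + 1) → R) (hc : ∃ k, ¬ p ∣ c k) (m : ℕ) :
    ∃ g : Fin m ↪ Fin (m + s), ¬ p ∣ ((bandMatrix c m).submatrix id g).det := by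
  obtain ⟨t, ht, hmin⟩ := exists_minimal_of_wellFoundedLT _ hc
  have hbelow : ∀ k < t, p ∣ c k := fun k hk => by
    by_contra h
    exact hk.not_ge (hmin h hk.le)
  refine ⟨shiftEmb m t, fun hdet => ht (hp.dvd_of_dvd_pow (n := m) ?_)⟩
  simpa using dvd_sub hdet (dvd_det_bandMatrix_submatrix_shiftEmb_sub p c m t hbelow)

end BandMatrix

lemma Finset.exists_not_dvd_of_gcd_eq_one {ι α : Type*} [CommMonoidWithZero α]
    [NormalizedGCDMonoid α] {s : Finset ι} {f : ι → α} (h : s.gcd f = 1) {p : α}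
    (hp : ¬ IsUnit p) : ∃ i ∈ s, ¬ p ∣ f i := by
  by_contra! hdvd
  exact hp (isUnit_of_dvd_one (h ▸ Finset.dvd_gcd hdvd))

lemma Int.finset_gcd_eq_one_of_forall_prime {ι : Type*} {s : Finset ι} {f : ι → ℤ}
    (h : ∀ p : ℤ, Prime p → ∃ i ∈ s, ¬ p ∣ f i) : s.gcd f = 1 := by
  rw [← Finset.normalize_gcd, normalize_eq_one, Int.isUnit_iff_natAbs_eq]
  by_contra hne
  obtain ⟨p, hp, hpd⟩ := Int.exists_prime_and_dvd hne
  obtain ⟨i, hi, hpi⟩ := h p hp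
  exact hpi (hpd.trans (Finset.gcd_dvd hi))

theorem gcd_det_bandMatrix_submatrix_eq_one {s : ℕ} (c : Fin (s + 1) → ℤ)
    (hc : Finset.univ.gcd c = 1) (m : ℕ) :
    Finset.univ.gcd (fun g : Fin m ↪ Fin (m + s) => ((bandMatrix c m).submatrix id g).det) = 1 :=
  Int.finset_gcd_eq_one_of_forall_prime fun p hp => by
    obtain ⟨k, -, hk⟩ := Finset.exists_not_dvd_of_gcd_eq_one hc hp.not_isUnit
    obtain ⟨g, hg⟩ := exists_not_dvd_det_bandMatrix_submatrix hp c ⟨k, hk⟩ m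
    exact ⟨g, Finset.mem_univ g, hg⟩

/-- **Lemma.** Let `s ≥ 1` and `c = (c 0, …, c s) ∈ ℤ^(s+1)` with `c 0 ≠ 0`, `c s ≠ 0` and
`gcd (c 0, …, c s) = 1`, let `m ≥ 1`, and let `M = M(c,m)` be the `m × (m+s)` matrix whose row
`i` contains `c 0, …, c s` in columns `i, …, i+s` and zeros elsewhere. Then the `m × m` minors
of `M` are relatively prime: the gcd of the determinants of all `m × m` submatrices of `M`
(given by choices of `m` of the `m + s` columns) equals `1`. -/
theorem minors_Mcm_coprime (s : ℕ) (c : Fin (s + 1) → ℤ)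
    (hgcd : Finset.gcd Finset.univ c = 1)
    (m : ℕ) (M : Matrix (Fin m) (Fin (m + s)) ℤ)
    (hM : ∀ (i : Fin m) (j : Fin (m + s)),
      M i j = if h : (i : ℕ) ≤ (j : ℕ) ∧ (j : ℕ) ≤ (i : ℕ) + s then
          c ⟨(j : ℕ) - (i : ℕ), by omega⟩ else 0) :
    Finset.gcd Finset.univ
      (fun g : Fin m ↪ Fin (m + s) => (M.submatrix id g).det) = 1 := by
  have hband : M = bandMatrix c m := Matrix.ext fun i j => hM i j
  exact hband ▸ gcd_det_bandMatrix_submatrix_eq_one c hgcd m
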